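/- arXiv:1909.02916 — 5 statements merged into one kernel-verified Lean document; each statement's English description precedes it below -/
import Mathlib

section
/- Let α ≥ 0, β > 0, and let f : ℝ → ℝ be twice continuously differentiable on (-∞, 1] satisfying f(y) + α² y f'(y) - (1/β²) f''(y) = 0 for y < 1, with f(1) = 1, f'(1) = 1, and f(y) → 0 as y → -∞. Then f(y) > y for all y ∈ [0, 1) ; combined with f(1) = 1 this gives f(y) ≥ y on [0,1]. -/
open Filter Topology

theorem stmt1 (α β : ℝ) (hα : 0 ≤ α) (hβ : 0 < β) (f : ℝ → ℝ)
    (hf : ContDiffOn ℝ 2 f (Set.Iic 1))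
    (hode : ∀ y < (1:ℝ),
      f y + α ^ 2 * y * deriv f y - (1 / β ^ 2) * deriv (deriv f) y = 0)
    (hf1 : f 1 = 1) (hf'1 : deriv f 1 = 1)
    (hlim : Tendsto f atBot (𝓝 0)) :
    (∀ y ∈ Set.Ico (0:ℝ) 1, y < f y) ∧ (∀ y ∈ Set.Icc (0:ℝ) 1, y ≤ f y) := by
  have hβ2 : (0:ℝ) < β ^ 2 := by positivity
  have hdiff1 : DifferentiableAt ℝ f 1 := by
    by_contra h
    rw [deriv_zero_of_not_differentiableAt h] at hf'1
    norm_num at hf'1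
  have hct : ∀ y < (1:ℝ), ContDiffAt ℝ 2 f y := fun y hy =>
    hf.contDiffAt (Iic_mem_nhds hy)
  have hfd : ∀ y ≤ (1:ℝ), HasDerivAt f (deriv f y) y := by
    intro y hy
    rcases eq_or_lt_of_le hy with rfl | hy'
    · exact hdiff1.hasDerivAt
    · exact ((hct y hy').differentiableAt two_ne_zero).hasDerivAt
  have hgd : ∀ y < (1:ℝ),
      HasDerivAt (deriv f) (β ^ 2 * (f y + α ^ 2 * y * deriv f y)) y := by
    intro y hy
    obtain ⟨u, hu, hcu⟩ := (hct y hy).contDiffOn (le_refl 2) (by simp)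
    have hyint : y ∈ interior u := mem_interior_iff_mem_nhds.2 hu
    have hdd : ContDiffOn ℝ 1 (deriv f) (interior u) :=
      (hcu.mono interior_subset).deriv_of_isOpen isOpen_interior (by norm_num)
    have hdiffg : DifferentiableAt ℝ (deriv f) y :=
      (hdd.differentiableOn one_ne_zero).differentiableAt
        (isOpen_interior.mem_nhds hyint)
    have heq : deriv (deriv f) y = β ^ 2 * (f y + α ^ 2 * y * deriv f y) := by
      have h := hode y hy
      have hne : β ^ 2 ≠ 0 := ne_of_gt hβ2
      field_simp at h
      linarith
    exact heq ▸ hdiffg.hasDerivAt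
  have hfcont : ContinuousOn f (Set.Iic 1) := fun y hy =>
    ((hfd y hy).differentiableAt.continuousAt).continuousWithinAt
  have hgcont : ContinuousOn (deriv f) (Set.Iic 1) := by
    have h1 : ContinuousOn (derivWithin f (Set.Iic 1)) (Set.Iic 1) :=
      hf.continuousOn_derivWithin (uniqueDiffOn_Iic 1) (by norm_num)
    refine h1.congr ?_
    intro y hy
    rcases eq_or_lt_of_le (Set.mem_Iic.1 hy) with rfl | hy'
    · exact (hdiff1.derivWithin (uniqueDiffOn_Iic 1 1 Set.self_mem_Iic)).symm
    · exact (derivWithin_of_mem_nhds (Iic_mem_nhds hy')).symm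
  -- Step 1 : f is positive on Iic 1
  have hpos : ∀ y ∈ Set.Iic (1:ℝ), 0 < f y := by
    by_contra hcon
    push_neg at hcon
    obtain ⟨y₀, hy₀, hfy₀⟩ := hcon
    by_cases hneg : ∃ z ∈ Set.Iic (1:ℝ), f z < 0
    · obtain ⟨z, hz1, hz⟩ := hneg
      have hz1' : z < 1 := by
        rcases eq_or_lt_of_le (Set.mem_Iic.1 hz1) with rfl | h
        · linarith
        · exact h
      obtain ⟨M, hM⟩ := eventually_atBot.1
        (hlim.eventually (lt_mem_nhds (show f z / 2 < 0 by linarith)))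
      set M' := min M (z - 1) with hM'def
      have hM'M : M' ≤ M := min_le_left _ _
      have hM'z : M' < z := lt_of_le_of_lt (min_le_right _ _) (by linarith)
      have hsub : Set.Icc M' 1 ⊆ Set.Iic 1 := fun x hx => hx.2
      obtain ⟨w, hwmem, hwmin⟩ := isCompact_Icc.exists_isMinOn
        (Set.nonempty_Icc.2 (by linarith)) (hfcont.mono hsub)
      have hwz : f w ≤ f z := isMinOn_iff.1 hwmin z ⟨hM'z.le, hz1⟩
      have hw1 : w < 1 := by
        rcases eq_or_lt_of_le hwmem.2 with heq | h
        · exfalso; rw [heq] at hwz; rw [hf1] at hwz; linarith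
        · exact h
      have hwM : M' < w := by
        rcases eq_or_lt_of_le hwmem.1 with heq | h
        · exfalso
          have h1 := hM M' hM'M
          rw [heq] at h1
          linarith
        · exact h
      have hloc : IsLocalMin f w := hwmin.isLocalMin (Icc_mem_nhds hwM hw1)
      have hgw : deriv f w = 0 := hloc.deriv_eq_zero
      have hc : HasDerivAt (deriv f) (β ^ 2 * (f w + α ^ 2 * w * deriv f w)) w :=
        hgd w hw1
      have hcneg : β ^ 2 * (f w + α ^ 2 * w * deriv f w) < 0 := by
        rw [hgw]
        have : f w < 0 := by linarith
        nlinarith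
      have hslope := hasDerivAt_iff_tendsto_slope.1 hc
      have hev1 : ∀ᶠ x in 𝓝[<] w, slope (deriv f) w x < 0 :=
        (hslope.eventually (gt_mem_nhds hcneg)).filter_mono
          (nhdsWithin_mono w (fun x hx => Set.mem_compl_singleton_iff.2 (ne_of_lt hx)))
      have hev2 : ∀ᶠ x in 𝓝[<] w, M' < x :=
        (eventually_gt_nhds hwM).filter_mono nhdsWithin_le_nhds
      obtain ⟨l, hl, hIoo⟩ := mem_nhdsLT_iff_exists_Ioo_subset.1 (hev1.and hev2)
      have hlw : l < w := hl
      set b := (l + w) / 2 with hbdef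
      have hbmem : b ∈ Set.Ioo l w := ⟨by rw [hbdef]; linarith, by rw [hbdef]; linarith⟩
      have hmono : StrictMonoOn f (Set.Icc b w) := by
        apply strictMonoOn_of_deriv_pos (convex_Icc _ _)
          (hfcont.mono (fun x hx => le_trans hx.2 hw1.le))
        intro x hx
        rw [interior_Icc] at hx
        have hxI : x ∈ Set.Ioo l w := ⟨lt_trans hbmem.1 hx.1, hx.2⟩
        have hs := (hIoo hxI).1
        rw [slope_def_field, hgw, sub_zero] at hs
        by_contra h0
        push_neg at h0
        have : 0 ≤ deriv f x / (x - w) :=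
          div_nonneg_of_nonpos h0 (by linarith [hx.2])
        linarith
      have hblt : f b < f w :=
        hmono ⟨le_rfl, hbmem.2.le⟩ ⟨hbmem.2.le, le_rfl⟩ hbmem.2
      have : f w ≤ f b :=
        isMinOn_iff.1 hwmin b ⟨le_of_lt (hIoo hbmem).2, by linarith [hbmem.2, hw1]⟩
      linarith
    · push_neg at hneg
      have hf0 : f y₀ = 0 := le_antisymm hfy₀ (hneg y₀ hy₀)
      have hy₀1 : y₀ < 1 := by
        rcases eq_or_lt_of_le (Set.mem_Iic.1 hy₀) with rfl | h
        · rw [hf1] at hf0; norm_num at hf0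
        · exact h
      have hloc : IsLocalMin f y₀ := by
        filter_upwards [Iic_mem_nhds hy₀1] with x hx
        rw [hf0]; exact hneg x hx
      have hg0 : deriv f y₀ = 0 := hloc.deriv_eq_zero
      set R : ℝ := max 1 (-y₀) with hRdef
      have hR1 : (1:ℝ) ≤ R := le_max_left _ _
      have hR2 : -y₀ ≤ R := le_max_right _ _
      set K : ℝ := 2 * β + 2 * β ^ 2 * α ^ 2 * R with hKdef
      set u : ℝ → ℝ := fun y => β ^ 2 * (f y * f y) + deriv f y * deriv f y with hudef
      have hsub : Set.Icc y₀ 1 ⊆ Set.Iic 1 := fun x hx => hx.2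
      have hucont : ContinuousOn u (Set.Icc y₀ 1) := by
        apply ContinuousOn.add
        · exact continuousOn_const.mul ((hfcont.mono hsub).mul (hfcont.mono hsub))
        · exact (hgcont.mono hsub).mul (hgcont.mono hsub)
      have hu' : ∀ t ∈ Set.Ico y₀ 1, HasDerivWithinAt u
          (4 * β ^ 2 * f t * deriv f t
            + 2 * β ^ 2 * α ^ 2 * t * (deriv f t * deriv f t)) (Set.Ici t) t := by
        intro t ht
        have h1 := hfd t ht.2.le
        have h2 := hgd t ht.2
        have hda : HasDerivAt u (β ^ 2 * (deriv f t * f t + f t * deriv f t)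
            + ((β ^ 2 * (f t + α ^ 2 * t * deriv f t)) * deriv f t
              + deriv f t * (β ^ 2 * (f t + α ^ 2 * t * deriv f t)))) t :=
          ((h1.mul h1).const_mul (β ^ 2)).add (h2.mul h2)
        have := hda.hasDerivWithinAt (s := Set.Ici t)
        exact this.congr_deriv (by ring)
      have hbound : ∀ t ∈ Set.Ico y₀ 1,
          ‖4 * β ^ 2 * f t * deriv f t
            + 2 * β ^ 2 * α ^ 2 * t * (deriv f t * deriv f t)‖ ≤ K * ‖u t‖ + 0 := by
        intro t ht
        have ht1 : -R ≤ t := by linarith [ht.1]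
        have ht2 : t ≤ R := by linarith [ht.2.le]
        have hut : 0 ≤ u t := by
          have h1 := mul_self_nonneg (f t)
          have h2 := mul_self_nonneg (deriv f t)
          simp only [hudef]
          nlinarith
        rw [Real.norm_eq_abs, Real.norm_eq_abs, abs_of_nonneg hut, add_zero]
        have habs1 : |4 * β ^ 2 * f t * deriv f t|
            ≤ 2 * β * (β ^ 2 * (f t * f t) + deriv f t * deriv f t) := by
          rw [abs_le]
          constructor
          · nlinarith [sq_nonneg (β * f t + deriv f t), hβ.le]
          · nlinarith [sq_nonneg (β * f t - deriv f t), hβ.le]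
        have habs2 : |2 * β ^ 2 * α ^ 2 * t * (deriv f t * deriv f t)|
            ≤ 2 * β ^ 2 * α ^ 2 * R * (deriv f t * deriv f t) := by
          have h1 : |2 * β ^ 2 * α ^ 2 * t * (deriv f t * deriv f t)|
              = 2 * β ^ 2 * α ^ 2 * |t| * (deriv f t * deriv f t) := by
            rw [abs_mul, abs_mul, abs_of_nonneg (by positivity : (0:ℝ) ≤ 2 * β ^ 2 * α ^ 2),
              abs_mul_self]
          rw [h1]
          have htR : |t| ≤ R := abs_le.2 ⟨ht1, ht2⟩
          have hg2 := mul_self_nonneg (deriv f t)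
          nlinarith [mul_nonneg (by positivity : (0:ℝ) ≤ 2 * β ^ 2 * α ^ 2) hg2]
        calc |4 * β ^ 2 * f t * deriv f t
              + 2 * β ^ 2 * α ^ 2 * t * (deriv f t * deriv f t)|
            ≤ |4 * β ^ 2 * f t * deriv f t|
              + |2 * β ^ 2 * α ^ 2 * t * (deriv f t * deriv f t)| := abs_add_le _ _
          _ ≤ 2 * β * (β ^ 2 * (f t * f t) + deriv f t * deriv f t)
              + 2 * β ^ 2 * α ^ 2 * R * (deriv f t * deriv f t) := add_le_add habs1 habs2
          _ ≤ K * u t := by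
              simp only [hudef, hKdef]
              nlinarith [mul_nonneg (by positivity : (0:ℝ) ≤ 2 * β ^ 2 * α ^ 2 * R)
                (mul_nonneg hβ2.le (mul_self_nonneg (f t)))]
      have hga : ‖u y₀‖ ≤ 0 := by
        simp [hudef, hf0, hg0]
      have hfin := norm_le_gronwallBound_of_norm_deriv_right_le hucont hu' hga hbound 1
        (Set.right_mem_Icc.2 hy₀1.le)
      rw [gronwallBound_ε0_δ0] at hfin
      have hval : u 1 = β ^ 2 + 1 := by
        simp [hudef, hf1, hf'1]
      rw [hval] at hfin
      have := le_trans (le_abs_self (β ^ 2 + 1)) hfin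
      nlinarith
  -- Step 2 : deriv f is positive on Iic 1
  have hgpos : ∀ y ∈ Set.Iic (1:ℝ), 0 < deriv f y := by
    by_contra hcon
    push_neg at hcon
    obtain ⟨t₀, ht₀, hgt₀⟩ := hcon
    have ht₀1 : t₀ < 1 := by
      rcases eq_or_lt_of_le (Set.mem_Iic.1 ht₀) with rfl | h
      · rw [hf'1] at hgt₀; norm_num at hgt₀
      · exact h
    set φ : ℝ → ℝ := fun y => Real.exp (-(β ^ 2 * α ^ 2 * y ^ 2 / 2)) * deriv f y with hφdef
    have hφd : ∀ y < (1:ℝ), HasDerivAt φ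
        (Real.exp (-(β ^ 2 * α ^ 2 * y ^ 2 / 2)) * (β ^ 2 * f y)) y := by
      intro y hy
      have hinner : HasDerivAt (fun y : ℝ => -(β ^ 2 * α ^ 2 * y ^ 2 / 2))
          (-(β ^ 2 * α ^ 2 * y)) y := by
        have h := (hasDerivAt_pow 2 y)
        have h2 := (((hasDerivAt_pow 2 y).const_mul (β ^ 2 * α ^ 2)).div_const 2).neg
        exact h2.congr_deriv (by norm_num; ring)
      have hm := hinner.exp.mul (hgd y hy)
      exact hm.congr_deriv (by ring)
    have hφcont : ContinuousOn φ (Set.Iic 1) :=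
      (Continuous.continuousOn (by
        exact Real.continuous_exp.comp ((continuous_const.mul (continuous_pow 2)).div_const 2).neg)).mul hgcont
    have hφmono : StrictMonoOn φ (Set.Iic 1) := by
      apply strictMonoOn_of_deriv_pos (convex_Iic 1) hφcont
      intro x hx
      rw [interior_Iic] at hx
      rw [(hφd x hx).deriv]
      have := hpos x (Set.mem_Iic.2 hx.le)
      positivity
    have hφt₀ : φ t₀ ≤ 0 := by
      simp only [hφdef]
      nlinarith [mul_nonneg (Real.exp_pos (-(β ^ 2 * α ^ 2 * t₀ ^ 2 / 2))).le
        (neg_nonneg.2 hgt₀)]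
    have hanti : StrictAntiOn f (Set.Iic t₀) := by
      apply strictAntiOn_of_deriv_neg (convex_Iic t₀)
        (hfcont.mono (Set.Iic_subset_Iic.2 (Set.mem_Iic.1 ht₀)))
      intro x hx
      rw [interior_Iic] at hx
      have hφx : φ x < φ t₀ := hφmono (Set.mem_Iic.2 (le_of_lt (lt_of_lt_of_le hx (Set.mem_Iic.1 ht₀)))) ht₀ hx
      by_contra h0
      push_neg at h0
      have hnn : 0 ≤ φ x := by
        simp only [hφdef]
        exact mul_nonneg (Real.exp_pos _).le h0
      linarith
    obtain ⟨M, hM⟩ := eventually_atBot.1 (hlim.eventually (gt_mem_nhds (hpos t₀ ht₀)))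
    have h1 := hM (min M (t₀ - 1)) (min_le_left _ _)
    have hlt : min M (t₀ - 1) < t₀ := lt_of_le_of_lt (min_le_right _ _) (by linarith)
    have h2 : f t₀ < f (min M (t₀ - 1)) := hanti (Set.mem_Iic.2 hlt.le) (Set.mem_Iic.2 le_rfl) hlt
    linarith
  -- Step 3 : conclusion
  have hgmono : StrictMonoOn (deriv f) (Set.Icc 0 1) := by
    apply strictMonoOn_of_deriv_pos (convex_Icc 0 1) (hgcont.mono (fun x hx => hx.2))
    intro x hx
    rw [interior_Icc] at hx
    rw [(hgd x hx.2).deriv]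
    have h1 := hpos x (Set.mem_Iic.2 hx.2.le)
    have h2 := hgpos x (Set.mem_Iic.2 hx.2.le)
    have h3 : 0 ≤ α ^ 2 * x * deriv f x := by
      apply mul_nonneg (mul_nonneg (sq_nonneg α) hx.1.le) h2.le
    nlinarith
  have hanti : StrictAntiOn (fun y => f y - y) (Set.Icc 0 1) := by
    apply strictAntiOn_of_deriv_neg (convex_Icc 0 1)
    · exact (hfcont.mono (fun x hx => hx.2)).sub continuousOn_id
    · intro x hx
      rw [interior_Icc] at hx
      have hd : HasDerivAt (fun y => f y - y) (deriv f x - 1) x :=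
        (hfd x hx.2.le).sub (hasDerivAt_id x)
      rw [hd.deriv]
      have := hgmono ⟨hx.1.le, hx.2.le⟩ (Set.right_mem_Icc.2 zero_le_one) hx.2
      rw [hf'1] at this
      linarith
  have hmain : ∀ y ∈ Set.Ico (0:ℝ) 1, y < f y := by
    intro y hy
    have := hanti ⟨hy.1, hy.2.le⟩ (Set.right_mem_Icc.2 zero_le_one) hy.2
    simp only [hf1] at this
    linarith
  refine ⟨hmain, ?_⟩
  intro y hy
  rcases eq_or_lt_of_le hy.2 with rfl | h
  · rw [hf1]
  · exact (hmain y ⟨hy.1, h⟩).le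
end

section
/- Let α ≥ 0, β > 0, and let f : ℝ → ℝ be twice continuously differentiable on (-∞, 1] satisfying f(y) + α² y f'(y) - (1/β²) f''(y) = 0 for y < 1, with f(1) = 1, f'(1) = 1, and f(y) → 0 as y → -∞. Then f(y) > 0 for all y ≤ 0. -/
/-!
The equation gives `f'' = β² (f + α² y f')` on `(-∞, 1)`. If `f` took a negative value, the
decay at `-∞` and `f 1 = 1` would give a global minimum `ŷ < 1` of `f` on `(-∞, 1]` with
`f ŷ < 0`; there `f' ŷ = 0` and `f'' ŷ ≥ 0`, contradicting `f'' ŷ = β² f ŷ < 0`. So `f ≥ 0`,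
and a zero `y ≤ 0` of `f` is an interior minimum, where `f` and `f'` both vanish. By Grönwall's
inequality for the linear system satisfied by `(f, f')`, `f` then vanishes on `[y, 1)`,
contradicting `f 1 = 1`.
-/

open Filter Topology Set

theorem ContDiffOn.hasDerivAt_deriv_deriv {f : ℝ → ℝ} {s : Set ℝ} {x : ℝ}
    (hf : ContDiffOn ℝ 2 f s) (hs : s ∈ 𝓝 x) : HasDerivAt (deriv f) (deriv (deriv f) x) x :=
  ((hf.mono interior_subset).deriv_of_isOpen isOpen_interior (by norm_num)
    |>.differentiableOn one_ne_zero |>.differentiableAt (interior_mem_nhds.mpr hs)).hasDerivAt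

theorem IsLocalMin.deriv_deriv_nonneg {f : ℝ → ℝ} {x : ℝ} (h : IsLocalMin f x)
    (hc : ContinuousAt f x) : 0 ≤ deriv (deriv f) x := by
  by_contra! hneg
  have hconst : f =ᶠ[𝓝 x] fun _ => f x :=
    (h.and (isLocalMax_of_deriv_deriv_neg hneg h.deriv_eq_zero hc)).mono
      fun _ hy => le_antisymm hy.2 hy.1
  have : deriv (deriv f) x = 0 := by
    rw [hconst.deriv.deriv_eq]
    simp
  exact hneg.ne this

theorem nonneg_on_Iic_of_tendsto_atBot {f : ℝ → ℝ} {b : ℝ} (hf : ContinuousOn f (Iic b))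
    (hlim : Tendsto f atBot (𝓝 0)) (hb : 0 ≤ f b)
    (hmin : ∀ x < b, IsMinOn f (Iic b) x → 0 ≤ f x) : ∀ x ≤ b, 0 ≤ f x := by
  by_contra! ⟨x₀, hx₀b, hx₀⟩
  have hfar : ∀ᶠ x in cocompact ℝ ⊓ 𝓟 (Iic b), f x₀ ≤ f x := by
    rw [cocompact_eq_atBot_atTop, inf_sup_right, (disjoint_atTop_principal_Iic b).eq_bot,
      sup_bot_eq]
    exact Eventually.filter_mono inf_le_left (hlim.eventually (eventually_ge_nhds hx₀))
  obtain ⟨m, hmb, hm⟩ := hf.exists_isMinOn' isClosed_Iic hx₀b hfar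
  have hmx₀ : f m < 0 := (hm hx₀b).trans_lt hx₀
  have hmb' : m < b := hmb.lt_of_ne fun h => (h ▸ hb).not_gt hmx₀
  exact (hmin m hmb' hm).not_gt hmx₀

theorem eqOn_zero_of_abs_second_deriv_le {f f' f'' : ℝ → ℝ} {a b K : ℝ}
    (hf : ∀ t ∈ Ico a b, HasDerivAt f (f' t) t)
    (hf' : ∀ t ∈ Ico a b, HasDerivAt f' (f'' t) t)
    (bound : ∀ t ∈ Ico a b, |f'' t| ≤ K * (|f t| + |f' t|)) (ha : f a = 0) (ha' : f' a = 0) :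
    EqOn f 0 (Ico a b) := by
  intro t ht
  have hsub : Icc a t ⊆ Ico a b := Icc_subset_Ico_right ht.2
  have hstate : ∀ s ∈ Ico a t, HasDerivAt (fun s => (f s, f' s)) (f' s, f'' s) s :=
    fun s hs =>
    (hf s (hsub (Ico_subset_Icc_self hs))).prodMk (hf' s (hsub (Ico_subset_Icc_self hs)))
  have hcont : ContinuousOn (fun s => (f s, f' s)) (Icc a t) := fun s hs =>
    ((hf s (hsub hs)).continuousAt.prodMk (hf' s (hsub hs)).continuousAt).continuousWithinAt
  -- `ℝ × ℝ` carries the sup norm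
  have hbound : ∀ s ∈ Ico a t, ‖(f' s, f'' s)‖ ≤ (1 + 2 * |K|) * ‖(f s, f' s)‖ := by
    intro s hs
    simp only [Prod.norm_def, Real.norm_eq_abs]
    set M := max |f s| |f' s|
    have hM : 0 ≤ M := (abs_nonneg _).trans (le_max_left _ _)
    have hsum : |f s| + |f' s| ≤ 2 * M := by
      linarith [le_max_left |f s| |f' s|, le_max_right |f s| |f' s|]
    refine max_le (by nlinarith [le_max_right |f s| |f' s|, abs_nonneg K]) ?_
    calc |f'' s| ≤ K * (|f s| + |f' s|) := bound s (hsub (Ico_subset_Icc_self hs))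
      _ ≤ |K| * (2 * M) := mul_le_mul (le_abs_self K) hsum (by positivity) (abs_nonneg K)
      _ ≤ (1 + 2 * |K|) * M := by nlinarith
  have := eq_zero_of_abs_deriv_le_mul_abs_self_of_eq_zero_right hcont
    (fun s hs => (hstate s hs).hasDerivWithinAt) (by simp [ha, ha']) hbound t ⟨ht.1, le_rfl⟩
  exact congrArg Prod.fst this

theorem abs_mul_add_mul_le {a b t c u v : ℝ} (ha : 0 ≤ a) (hb : 0 ≤ b) (ht : |t| ≤ c) :
    |a * (u + b * t * v)| ≤ a * (1 + b * c) * (|u| + |v|) := by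
  have hc : 0 ≤ c := (abs_nonneg t).trans ht
  calc |a * (u + b * t * v)| ≤ a * (|u| + b * c * |v|) := by
        rw [abs_mul, abs_of_nonneg ha]
        gcongr
        refine (abs_add_le _ _).trans ?_
        rw [abs_mul, abs_mul, abs_of_nonneg hb]
        gcongr
    _ ≤ a * (1 + b * c) * (|u| + |v|) := by
        have : 0 ≤ a * (|v| + b * c * |u|) := by positivity
        nlinarith

theorem stmt2_general (α β : ℝ) (hβ : 0 < β) (f : ℝ → ℝ)
    (hf : ContDiffOn ℝ 2 f (Set.Iic 1))
    (hode : ∀ y < (1:ℝ),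
      f y + α ^ 2 * y * deriv f y - (1 / β ^ 2) * deriv (deriv f) y = 0)
    (hf1 : f 1 = 1)
    (hlim : Tendsto f atBot (𝓝 0)) :
    ∀ y ≤ (0:ℝ), 0 < f y := by
  have hd₁ : ∀ y < (1:ℝ), HasDerivAt f (deriv f y) y := fun y hy =>
    (hf.differentiableOn (by norm_num) |>.differentiableAt (Iic_mem_nhds hy)).hasDerivAt
  have hd₂ : ∀ y < (1:ℝ), HasDerivAt (deriv f) (deriv (deriv f) y) y := fun y hy =>
    hf.hasDerivAt_deriv_deriv (Iic_mem_nhds hy)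
  have hf'' : ∀ y < (1:ℝ), deriv (deriv f) y = β ^ 2 * (f y + α ^ 2 * y * deriv f y) := by
    intro y hy
    have h := hode y hy
    field_simp at h
    linarith
  have hnonneg : ∀ y ≤ (1:ℝ), 0 ≤ f y := by
    refine nonneg_on_Iic_of_tendsto_atBot hf.continuousOn hlim (by simp [hf1]) fun x hx hmin => ?_
    have hloc : IsLocalMin f x := hmin.isLocalMin (Iic_mem_nhds hx)
    have := hloc.deriv_deriv_nonneg (hd₁ x hx).continuousAt
    rw [hf'' x hx, hloc.deriv_eq_zero, mul_zero, add_zero] at this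
    exact nonneg_of_mul_nonneg_right this (by positivity)
  intro y hy
  have hy1 : y < 1 := hy.trans_lt one_pos
  refine (hnonneg y hy1.le).lt_of_ne' fun hzero => ?_
  have hzero' : deriv f y = 0 := IsLocalMin.deriv_eq_zero <|
    mem_of_superset (Iic_mem_nhds hy1) fun t ht => hzero ▸ hnonneg t ht
  have hvanish : EqOn f 0 (Ico y 1) := by
    refine eqOn_zero_of_abs_second_deriv_le (K := β ^ 2 * (1 + α ^ 2 * (|y| + 1)))
      (fun t ht => hd₁ t ht.2) (fun t ht => hd₂ t ht.2) (fun t ht => ?_) hzero hzero'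
    rw [hf'' t ht.2]
    refine abs_mul_add_mul_le (sq_nonneg β) (sq_nonneg α) (abs_le.mpr ⟨?_, ?_⟩)
    · linarith [neg_abs_le y, ht.1]
    · linarith [abs_nonneg y, ht.2]
  have := hvanish.of_subset_closure (hf.continuousOn.mono Icc_subset_Iic_self) continuousOn_const
    Ico_subset_Icc_self (closure_Ico hy1.ne).ge ⟨hy1.le, le_rfl⟩
  simp [hf1] at this

theorem stmt2 (α β : ℝ) (hα : 0 ≤ α) (hβ : 0 < β) (f : ℝ → ℝ)
    (hf : ContDiffOn ℝ 2 f (Set.Iic 1))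
    (hode : ∀ y < (1:ℝ),
      f y + α ^ 2 * y * deriv f y - (1 / β ^ 2) * deriv (deriv f) y = 0)
    (hf1 : f 1 = 1) (hf'1 : deriv f 1 = 1)
    (hlim : Tendsto f atBot (𝓝 0)) :
    ∀ y ≤ (0:ℝ), 0 < f y :=
  stmt2_general α β hβ f hf hode hf1 hlim
end

section
/- Combining the positivity and comparison results: any twice continuously differentiable solution f on (-∞, 1] of f(y) + α² y f'(y) - (1/β²) f''(y) = 0 for y < 1 (with α ≥ 0, β > 0), satisfying f(1) = 1, f'(1) = 1, and f(y) → 0 as y → -∞, satisfies f(y) ≥ max(0, y) for all y ≤ 1. -/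
open Filter Topology Set

/-- Second derivative test: at an interior local min, the second derivative is nonneg. -/
theorem aux_sd {φ : ℝ → ℝ} {a : ℝ}
    (hd : ∀ᶠ y in 𝓝 a, DifferentiableAt ℝ φ y)
    (hd2 : HasDerivAt (deriv φ) (deriv (deriv φ) a) a)
    (hmin : IsLocalMin φ a) : 0 ≤ deriv (deriv φ) a := by
  by_contra hneg
  push_neg at hneg
  have h0 : deriv φ a = 0 := hmin.deriv_eq_zero
  have hs := hasDerivAt_iff_tendsto_slope.mp hd2
  have hev : ∀ᶠ y in 𝓝[≠] a, slope (deriv φ) a y < 0 :=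
    hs.eventually (Iio_mem_nhds hneg)
  have hev' : ∀ᶠ y in 𝓝 a, y ≠ a → slope (deriv φ) a y < 0 :=
    eventually_nhdsWithin_iff.mp hev
  have hmin' : ∀ᶠ y in 𝓝 a, φ a ≤ φ y := hmin
  have hall : ∀ᶠ y in 𝓝 a,
      (y ≠ a → slope (deriv φ) a y < 0) ∧ DifferentiableAt ℝ φ y ∧ φ a ≤ φ y :=
    hev'.and (hd.and hmin')
  obtain ⟨ε, hε, hball⟩ := Metric.eventually_nhds_iff.mp hall
  set b := a + ε / 2 with hb
  have hab : a < b := by simp [hb]; linarith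
  have hmem : ∀ y ∈ Icc a b, dist y a < ε := by
    intro y hy
    have hyb : y ≤ a + ε / 2 := hb ▸ hy.2
    rw [Real.dist_eq, abs_lt]
    constructor <;> [linarith [hy.1]; linarith [hyb, hε]]
  have hderivneg : ∀ y ∈ Ioo a b, deriv φ y < 0 := by
    intro y hy
    have h1 := (hball (hmem y (Ioo_subset_Icc_self hy))).1 (ne_of_gt hy.1)
    rw [slope_def_field, h0, sub_zero] at h1
    have hya : 0 < y - a := by linarith [hy.1]
    by_contra hc
    push_neg at hc
    exact absurd h1 (not_lt.mpr (div_nonneg hc hya.le))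
  have hcont : ContinuousOn φ (Icc a b) := fun y hy =>
    ((hball (hmem y hy)).2.1).continuousAt.continuousWithinAt
  have hanti : StrictAntiOn φ (Icc a b) := by
    apply strictAntiOn_of_deriv_neg (convex_Icc a b) hcont
    intro y hy
    rw [interior_Icc] at hy
    exact hderivneg y hy
  have hlt : φ b < φ a :=
    hanti (left_mem_Icc.mpr hab.le) (right_mem_Icc.mpr hab.le) hab
  have hge : φ a ≤ φ b := (hball (hmem b (right_mem_Icc.mpr hab.le))).2.2
  linarith

/-- Minimum principle on a compact interval. -/
theorem aux_minpr {φ : ℝ → ℝ} {A : ℝ} (hA : A ≤ 1) (hc : ContinuousOn φ (Icc A 1))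
    (hkey : ∀ y ∈ Ioo A 1, IsLocalMin φ y → 0 ≤ φ y) :
    ∀ y ∈ Icc A 1, min (min (φ A) (φ 1)) 0 ≤ φ y := by
  obtain ⟨c, hcmem, hcmin⟩ :=
    isCompact_Icc.exists_isMinOn (Set.nonempty_Icc.mpr hA) hc
  intro y hy
  have hcy : φ c ≤ φ y := hcmin hy
  rcases eq_or_lt_of_le hcmem.1 with hcA | hcA
  · calc min (min (φ A) (φ 1)) 0 ≤ φ A := (min_le_left _ _).trans (min_le_left _ _)
    _ = φ c := by rw [hcA]
    _ ≤ φ y := hcy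
  rcases eq_or_lt_of_le hcmem.2 with hc1 | hc1
  · calc min (min (φ A) (φ 1)) 0 ≤ φ 1 := (min_le_left _ _).trans (min_le_right _ _)
    _ = φ c := by rw [hc1]
    _ ≤ φ y := hcy
  · have hloc : IsLocalMin φ c := hcmin.isLocalMin (Icc_mem_nhds hcA hc1)
    have := hkey c ⟨hcA, hc1⟩ hloc
    calc min (min (φ A) (φ 1)) 0 ≤ 0 := min_le_right _ _
    _ ≤ φ c := this
    _ ≤ φ y := hcy

theorem stmt3 (α β : ℝ) (hα : 0 ≤ α) (hβ : 0 < β) (f : ℝ → ℝ)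
    (hf : ContDiffOn ℝ 2 f (Set.Iic 1))
    (hode : ∀ y < (1:ℝ),
      f y + α ^ 2 * y * deriv f y - (1 / β ^ 2) * deriv (deriv f) y = 0)
    (hf1 : f 1 = 1) (hf'1 : deriv f 1 = 1)
    (hlim : Tendsto f atBot (𝓝 0)) :
    ∀ y ≤ (1:ℝ), max 0 y ≤ f y := by
  have hβ2 : (0:ℝ) < β ^ 2 := by positivity
  have hβne : β ≠ 0 := ne_of_gt hβ
  -- basic differentiability facts on `Iio 1`
  have hfo : ContDiffOn ℝ 2 f (Iio 1) := hf.mono Iio_subset_Iic_self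
  have hfd : ∀ y ∈ Iio (1:ℝ), DifferentiableAt ℝ f y := by
    intro y hy
    exact (hfo.differentiableOn two_ne_zero).differentiableAt (Iio_mem_nhds hy)
  have hg1 : ContDiffOn ℝ 1 (deriv f) (Iio 1) := by
    exact hfo.deriv_of_isOpen (m := 1) isOpen_Iio (by norm_num)
  have hgd : ∀ y ∈ Iio (1:ℝ), DifferentiableAt ℝ (deriv f) y := fun y hy =>
    (hg1.differentiableOn one_ne_zero).differentiableAt (Iio_mem_nhds hy)
  -- the ODE, rearranged
  have hEq : ∀ y ∈ Iio (1:ℝ),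
      deriv (deriv f) y = β ^ 2 * (f y + α ^ 2 * y * deriv f y) := by
    intro y hy
    have h := hode y hy
    field_simp at h
    linarith
  -- `f` is differentiable at 1 and `deriv f` is continuous on `Iic 1`
  have hdiff1 : DifferentiableAt ℝ f 1 := by
    by_contra hc
    rw [deriv_zero_of_not_differentiableAt hc] at hf'1
    norm_num at hf'1
  have hgc : ContinuousOn (deriv f) (Iic 1) := by
    have h := hf.continuousOn_derivWithin (uniqueDiffOn_Iic 1) one_le_two
    apply h.congr
    intro y hy
    rcases eq_or_lt_of_le (mem_Iic.mp hy) with h1 | h1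
    · subst h1
      exact (hdiff1.derivWithin (uniqueDiffOn_Iic 1 1 self_mem_Iic)).symm
    · exact (derivWithin_of_mem_nhds (Iic_mem_nhds h1)).symm
  -- pointwise minimum principle for f
  have hsdf : ∀ c ∈ Iio (1:ℝ), IsLocalMin f c → 0 ≤ f c := by
    intro c hc hmin
    have h0 : deriv f c = 0 := hmin.deriv_eq_zero
    have hd2 : 0 ≤ deriv (deriv f) c := by
      apply aux_sd _ ((hgd c hc).hasDerivAt) hmin
      filter_upwards [Iio_mem_nhds hc] with z hz using hfd z hz
    have hoc := hode c hc
    rw [h0] at hoc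
    have h1 : f c = 1 / β ^ 2 * deriv (deriv f) c := by linarith
    rw [h1]
    exact mul_nonneg (by positivity) hd2
  -- f gets small near -∞
  have hsmall : ∀ ε > (0:ℝ), ∀ B : ℝ, ∃ A, A ≤ B ∧ |f A| < ε := by
    intro ε hε B
    have h := Metric.tendsto_nhds.mp hlim ε hε
    rw [eventually_atBot] at h
    obtain ⟨C, hC⟩ := h
    refine ⟨min C B, min_le_right _ _, ?_⟩
    have := hC (min C B) (min_le_left _ _)
    rwa [Real.dist_eq, sub_zero] at this
  -- positivity of f on Iic 1
  have hfpos : ∀ y ≤ (1:ℝ), 0 ≤ f y := by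
    intro y hy
    by_contra hcon
    push_neg at hcon
    set ε := -(f y) / 2 with hε
    have hεpos : 0 < ε := by rw [hε]; linarith
    obtain ⟨A, hAy, hAf⟩ := hsmall ε hεpos y
    rw [abs_lt] at hAf
    have hA1 : A ≤ 1 := hAy.trans hy
    have key := aux_minpr hA1 (hf.continuousOn.mono Icc_subset_Iic_self)
      (fun z hz hminz => hsdf z hz.2 hminz) y ⟨hAy, hy⟩
    have hm : -ε ≤ min (min (f A) (f 1)) 0 := by
      rw [hf1]
      exact le_min (le_min hAf.1.le (by linarith)) (by linarith)
    have : -ε ≤ f y := hm.trans key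
    rw [hε] at this
    linarith
  -- deriv f gets close to nonneg near -∞
  have hgsmall : ∀ ε > (0:ℝ), ∀ B ≤ (1:ℝ), ∃ A, A ≤ B ∧ -ε < deriv f A := by
    intro ε hε B hB1
    by_contra hcon
    push_neg at hcon
    have hF : ∀ A ≤ B, f B + ε * B ≤ f A + ε * A := by
      intro A hAB
      have hanti : AntitoneOn (fun z => f z + ε * z) (Icc A B) := by
        apply antitoneOn_of_deriv_nonpos (convex_Icc A B)
        · exact ContinuousOn.add
            (hf.continuousOn.mono fun z hz => le_trans hz.2 hB1)
            (Continuous.continuousOn (by continuity))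
        · rw [interior_Icc]
          intro z hz
          exact ((hfd z (lt_of_lt_of_le hz.2 hB1)).add
            (differentiableAt_id.const_mul ε)).differentiableWithinAt
        · intro z hz
          rw [interior_Icc] at hz
          have hz1 : z < 1 := lt_of_lt_of_le hz.2 hB1
          have hder : deriv (fun z => f z + ε * z) z = deriv f z + ε := by
            have h1 : HasDerivAt (fun z => f z + ε * z) (deriv f z + ε * 1) z :=
              ((hfd z hz1).hasDerivAt).add ((hasDerivAt_id z).const_mul ε)
            simpa using h1.deriv
          rw [hder]
          have := hcon z (le_of_lt hz.2)
          linarith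
      exact hanti (left_mem_Icc.mpr hAB) (right_mem_Icc.mpr hAB) hAB
    obtain ⟨A, hA, hfA⟩ := hsmall 1 one_pos (min B (B - (2 - f B) / ε))
    rw [abs_lt] at hfA
    have hAB : A ≤ B := hA.trans (min_le_left _ _)
    have hA2 : A ≤ B - (2 - f B) / ε := hA.trans (min_le_right _ _)
    have h3 : (2 - f B) / ε ≤ B - A := by linarith
    have h4 : 2 - f B ≤ ε * (B - A) := by
      rw [div_le_iff₀ hε] at h3
      linarith [h3]
    have h5 := hF A hAB
    have : f A ≥ 2 := by nlinarith
    linarith [hfA.2]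
  -- pointwise minimum principle for deriv f
  have hgsd : ∀ c ∈ Iio (1:ℝ), IsLocalMin (deriv f) c → 0 ≤ deriv f c := by
    intro c hc hmin
    set R := fun y => β ^ 2 * (f y + α ^ 2 * y * deriv f y) with hR
    have hEv : deriv (deriv f) =ᶠ[𝓝 c] R := by
      filter_upwards [Iio_mem_nhds hc] with z hz using hEq z hz
    have hdR : DifferentiableAt ℝ R c :=
      (((hfd c hc).add ((differentiableAt_id.const_mul (α ^ 2)).mul
        (hgd c hc)))).const_mul _
    have hddg : DifferentiableAt ℝ (deriv (deriv f)) c :=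
      (Filter.EventuallyEq.differentiableAt_iff hEv).mpr hdR
    have h0 : deriv (deriv f) c = 0 := hmin.deriv_eq_zero
    have hd2 : 0 ≤ deriv (deriv (deriv f)) c := by
      apply aux_sd _ hddg.hasDerivAt hmin
      filter_upwards [Iio_mem_nhds hc] with z hz using hgd z hz
    have hRder : HasDerivAt R
        (β ^ 2 * (deriv f c + (α ^ 2 * 1 * deriv f c + α ^ 2 * c * deriv (deriv f) c))) c := by
      apply HasDerivAt.const_mul
      exact ((hfd c hc).hasDerivAt).add
        (((hasDerivAt_id c).const_mul (α ^ 2)).mul ((hgd c hc).hasDerivAt))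
    have heq2 : deriv (deriv (deriv f)) c
        = β ^ 2 * (deriv f c + (α ^ 2 * 1 * deriv f c + α ^ 2 * c * deriv (deriv f) c)) := by
      rw [hEv.deriv_eq]
      exact hRder.deriv
    rw [heq2, h0] at hd2
    by_contra hcon
    push_neg at hcon
    have hfac : β ^ 2 * (deriv f c + (α ^ 2 * 1 * deriv f c + α ^ 2 * c * 0))
        = β ^ 2 * (1 + α ^ 2) * deriv f c := by ring
    rw [hfac] at hd2
    exact absurd hd2 (not_le.mpr (mul_neg_of_pos_of_neg
      (mul_pos hβ2 (by positivity)) hcon))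
  -- deriv f is nonnegative on Iic 1
  have hgpos : ∀ y ≤ (1:ℝ), 0 ≤ deriv f y := by
    intro y hy
    by_contra hcon
    push_neg at hcon
    set ε := -(deriv f y) / 2 with hε
    have hεpos : 0 < ε := by rw [hε]; linarith
    obtain ⟨A, hAy, hAg⟩ := hgsmall ε hεpos y hy
    have hA1 : A ≤ 1 := hAy.trans hy
    have key := aux_minpr hA1 (hgc.mono Icc_subset_Iic_self)
      (fun z hz hminz => hgsd z hz.2 hminz) y ⟨hAy, hy⟩
    have hm : -ε ≤ min (min (deriv f A) (deriv f 1)) 0 := by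
      rw [hf'1]
      exact le_min (le_min hAg.le (by linarith)) (by linarith)
    have : -ε ≤ deriv f y := hm.trans key
    rw [hε] at this
    linarith
  -- deriv f is monotone on [0,1], hence ≤ 1 there
  have hmono : MonotoneOn (deriv f) (Icc 0 1) := by
    apply monotoneOn_of_deriv_nonneg (convex_Icc 0 1) (hgc.mono Icc_subset_Iic_self)
    · rw [interior_Icc]
      intro z hz
      exact (hgd z hz.2).differentiableWithinAt
    · intro z hz
      rw [interior_Icc] at hz
      rw [hEq z hz.2]
      have h1 := hfpos z hz.2.le
      have h2 := hgpos z hz.2.le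
      exact mul_nonneg (sq_nonneg β)
        (add_nonneg h1 (mul_nonneg (mul_nonneg (sq_nonneg α) hz.1.le) h2))
  have hanti : AntitoneOn (fun z => f z - z) (Icc 0 1) := by
    apply antitoneOn_of_deriv_nonpos (convex_Icc 0 1)
    · exact (hf.continuousOn.mono Icc_subset_Iic_self).sub continuous_id.continuousOn
    · rw [interior_Icc]
      intro z hz
      exact ((hfd z hz.2).sub differentiableAt_id).differentiableWithinAt
    · intro z hz
      rw [interior_Icc] at hz
      have hder : deriv (fun z => f z - z) z = deriv f z - 1 := by
        have h1 : HasDerivAt (fun z => f z - z) (deriv f z - 1) z :=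
          ((hfd z hz.2).hasDerivAt).sub (hasDerivAt_id z)
        exact h1.deriv
      rw [hder]
      have := hmono (⟨hz.1.le, hz.2.le⟩ : z ∈ Icc (0:ℝ) 1) ⟨zero_le_one, le_rfl⟩ hz.2.le
      rw [hf'1] at this
      linarith
  intro y hy
  rcases le_or_gt y 0 with h0 | h0
  · rw [max_eq_left h0]
    exact hfpos y hy
  · rw [max_eq_right h0.le]
    have h2 : f 1 - 1 ≤ f y - y := hanti (⟨h0.le, hy⟩ : y ∈ Icc (0:ℝ) 1) ⟨zero_le_one, le_rfl⟩ hy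
    rw [hf1] at h2
    linarith
end

section
/- Let h : ℝ → ℝ be twice differentiable with h(x) + α² x h'(x) = h''(x) for all x < 0 (α > 0), h(x) > 0 for all x < 0, and suppose h(x)/x → -∞ both as x → -∞ and as x → 0⁻. Then there exists a unique x₀ < 0 such that x₀ h'(x₀) = h(x₀). -/
open Filter Topology Set

theorem stmt5 (α : ℝ) (hα : 0 < α) (h : ℝ → ℝ)
    (hd : ∀ x < (0:ℝ), DifferentiableAt ℝ h x ∧ DifferentiableAt ℝ (deriv h) x)
    (hode : ∀ x < (0:ℝ), deriv (deriv h) x = h x + α ^ 2 * x * deriv h x)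
    (hpos : ∀ x < (0:ℝ), 0 < h x)
    (hbot : Tendsto (fun x => h x / x) atBot atBot)
    (hzero : Tendsto (fun x => h x / x) (𝓝[<] 0) atBot) :
    ∃! x₀ : ℝ, x₀ < 0 ∧ x₀ * deriv h x₀ = h x₀ := by
  set φ : ℝ → ℝ := fun x => x * deriv h x - h x with hφdef
  -- derivative of φ
  have hφderiv : ∀ x < (0:ℝ), HasDerivAt φ (x * deriv (deriv h) x) x := by
    intro x hx
    have h1 : HasDerivAt (fun y => y * deriv h y)
        (1 * deriv h x + x * deriv (deriv h) x) x :=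
      (hasDerivAt_id x).mul ((hd x hx).2.hasDerivAt)
    have h2 : HasDerivAt h (deriv h x) x := (hd x hx).1.hasDerivAt
    have h3 := h1.sub h2
    rw [show x * deriv (deriv h) x = 1 * deriv h x + x * deriv (deriv h) x - deriv h x by ring]
    exact h3
  have hφcont : ∀ x < (0:ℝ), ContinuousAt φ x := fun x hx =>
    ((hφderiv x hx).differentiableAt).continuousAt
  -- derivative of φ is negative at zeros of φ
  have hkey : ∀ x < (0:ℝ), φ x = 0 → x * deriv (deriv h) x < 0 := by
    intro x hx h0
    have hx' : x * deriv h x = h x := by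
      have := sub_eq_zero.mp h0
      simpa using this
    have he : x * deriv (deriv h) x = (1 + α ^ 2) * (x * h x) := by
      rw [hode x hx]; linear_combination (α ^ 2 * x) * hx'
    rw [he]
    have h1 : x * h x < 0 := mul_neg_of_neg_of_pos hx (hpos x hx)
    have h2 : (0:ℝ) < 1 + α ^ 2 := by positivity
    exact mul_neg_of_pos_of_neg h2 h1
  -- uniqueness helper: no two zeros of φ
  have huniq : ∀ a b : ℝ, a < 0 → b < 0 → φ a = 0 → φ b = 0 → a < b → False := by
    intro a b ha hb hfa hfb hab
    have hDa : a * deriv (deriv h) a < 0 := hkey a ha hfa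
    have hDb : b * deriv (deriv h) b < 0 := hkey b hb hfb
    -- find a' ∈ (a,b) with φ a' < 0
    have hta : Tendsto (slope φ a) (𝓝[>] a) (𝓝 (a * deriv (deriv h) a)) :=
      (hasDerivAt_iff_tendsto_slope.mp (hφderiv a ha)).mono_left
        (nhdsWithin_mono a (fun x hx => ne_of_gt hx))
    have hea : ∀ᶠ x in 𝓝[>] a, slope φ a x < 0 := hta.eventually (eventually_lt_nhds hDa)
    have hea2 : Ioo a b ∈ 𝓝[>] a := Ioo_mem_nhdsGT_of_mem ⟨le_refl a, hab⟩
    have hea2' : ∀ᶠ x in 𝓝[>] a, x ∈ Ioo a b := hea2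
    obtain ⟨a', ha's, ha'mem⟩ := (hea.and hea2').exists
    have hφa' : φ a' < 0 := by
      have hsl : slope φ a a' = φ a' / (a' - a) := by
        rw [slope_def_field, hfa, sub_zero]
      rw [hsl] at ha's
      have hpos' : (0:ℝ) < a' - a := sub_pos.mpr ha'mem.1
      by_contra hcon
      push_neg at hcon
      exact absurd ha's (not_lt.mpr (div_nonneg hcon hpos'.le))
    -- find b' ∈ (a',b) with φ b' > 0
    have htb : Tendsto (slope φ b) (𝓝[<] b) (𝓝 (b * deriv (deriv h) b)) :=
      (hasDerivAt_iff_tendsto_slope.mp (hφderiv b hb)).mono_left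
        (nhdsWithin_mono b (fun x hx => ne_of_lt hx))
    have heb : ∀ᶠ x in 𝓝[<] b, slope φ b x < 0 := htb.eventually (eventually_lt_nhds hDb)
    have heb2 : Ioo a' b ∈ 𝓝[<] b := Ioo_mem_nhdsLT_of_mem ⟨ha'mem.2, le_refl b⟩
    have heb2' : ∀ᶠ x in 𝓝[<] b, x ∈ Ioo a' b := heb2
    obtain ⟨b', hb's, hb'mem⟩ := (heb.and heb2').exists
    have hφb' : 0 < φ b' := by
      have hsl : slope φ b b' = φ b' / (b' - b) := by
        rw [slope_def_field, hfb, sub_zero]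
      rw [hsl] at hb's
      have hneg' : b' - b < 0 := sub_neg.mpr hb'mem.2
      by_contra hcon
      push_neg at hcon
      exact absurd hb's (not_lt.mpr (div_nonneg_of_nonpos hcon hneg'.le))
    have ha'b' : a' < b' := hb'mem.1
    have hb'0 : b' < 0 := lt_trans hb'mem.2 hb
    -- continuity on Icc a' b'
    have hsub : ∀ x ∈ Icc a' b', x < 0 := fun x hx => lt_of_le_of_lt hx.2 hb'0
    have hcont : ContinuousOn φ (Icc a' b') := fun x hx =>
      (hφcont x (hsub x hx)).continuousWithinAt
    -- IVT gives a zero in [a', b']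
    have hivt : (0:ℝ) ∈ φ '' Icc a' b' := by
      apply intermediate_value_Icc (le_of_lt ha'b') hcont
      exact ⟨le_of_lt hφa', le_of_lt hφb'⟩
    obtain ⟨c₀, hc₀mem, hc₀⟩ := hivt
    -- the set of zeros, and its infimum
    set S : Set ℝ := Icc a' b' ∩ φ ⁻¹' {0} with hSdef
    have hSne : S.Nonempty := ⟨c₀, hc₀mem, by simpa using hc₀⟩
    have hSbdd : BddBelow S := ⟨a', fun x hx => hx.1.1⟩
    have hSclosed : IsClosed S :=
      hcont.preimage_isClosed_of_isClosed isClosed_Icc isClosed_singleton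
    set c := sInf S with hcdef
    have hcS : c ∈ S := hSclosed.csInf_mem hSne hSbdd
    have hφc : φ c = 0 := by simpa using hcS.2
    have hcIcc : c ∈ Icc a' b' := hcS.1
    have hc0 : c < 0 := hsub c hcIcc
    have ha'c : a' < c := by
      rcases lt_or_eq_of_le hcIcc.1 with h1 | h1
      · exact h1
      · exact absurd (h1 ▸ hφc) (ne_of_lt hφa')
    -- φ < 0 on [a', c)
    have hneg : ∀ x ∈ Ico a' c, φ x < 0 := by
      intro x hx
      by_contra hcon
      push_neg at hcon
      have hxb' : x ≤ b' := le_trans (le_of_lt hx.2) hcIcc.2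
      have hcont' : ContinuousOn φ (Icc a' x) :=
        hcont.mono (Icc_subset_Icc le_rfl hxb')
      have hivt' : (0:ℝ) ∈ φ '' Icc a' x := by
        apply intermediate_value_Icc hx.1 hcont'
        exact ⟨le_of_lt hφa', hcon⟩
      obtain ⟨y, hymem, hy⟩ := hivt'
      have hyS : y ∈ S := ⟨⟨hymem.1, le_trans hymem.2 hxb'⟩, by simpa using hy⟩
      have : c ≤ y := csInf_le hSbdd hyS
      have : y < c := lt_of_le_of_lt hymem.2 hx.2
      linarith [csInf_le hSbdd hyS]
    -- slope at c from the left is nonneg, so φ'(c) ≥ 0, contradiction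
    have hDc : c * deriv (deriv h) c < 0 := hkey c hc0 hφc
    have htc : Tendsto (slope φ c) (𝓝[<] c) (𝓝 (c * deriv (deriv h) c)) :=
      (hasDerivAt_iff_tendsto_slope.mp (hφderiv c hc0)).mono_left
        (nhdsWithin_mono c (fun x hx => ne_of_lt hx))
    have hec : ∀ᶠ x in 𝓝[<] c, 0 ≤ slope φ c x := by
      have hmemc : ∀ᶠ x in 𝓝[<] c, x ∈ Ioo a' c :=
        Ioo_mem_nhdsLT_of_mem (⟨ha'c, le_refl c⟩ : c ∈ Ioc a' c)
      filter_upwards [hmemc] with x hx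
      have hφx : φ x < 0 := hneg x ⟨le_of_lt hx.1, hx.2⟩
      have hxc : x - c < 0 := sub_neg.mpr hx.2
      rw [slope_def_field, hφc, sub_zero]
      exact le_of_lt (div_pos_of_neg_of_neg hφx hxc)
    have : 0 ≤ c * deriv (deriv h) c := ge_of_tendsto htc hec
    linarith
  -- existence
  have hgd : ∀ c < (0:ℝ), HasDerivAt (fun y => h y / y)
      ((deriv h c * c - h c * 1) / c ^ 2) c := fun c hc =>
    (hd c hc).1.hasDerivAt.div (hasDerivAt_id c) (ne_of_lt hc)
  have hex : ∃ c, c < 0 ∧ φ c = 0 := by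
    set M : ℝ := h (-1) / (-1) with hMdef
    obtain ⟨a, ha⟩ := eventually_atBot.mp (hbot.eventually (eventually_lt_atBot M))
    have h0 : {x | h x / x < M} ∈ 𝓝[<] (0:ℝ) := hzero.eventually (eventually_lt_atBot M)
    obtain ⟨b, hb0, hb⟩ := mem_nhdsLT_iff_exists_Ioo_subset.mp h0
    set A : ℝ := min a (-2) with hAdef
    set B : ℝ := max b (-1) / 2 with hBdef
    have hb0' : b < 0 := hb0
    have h2 : max b (-1) < 0 := max_lt hb0' (by norm_num)
    have hbB : b < B := by
      have h1 : b ≤ max b (-1) := le_max_left _ _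
      have : max b (-1) < B := by rw [hBdef]; linarith
      linarith
    have hB0 : B < 0 := by rw [hBdef]; linarith
    have hBge : (-1:ℝ)/2 ≤ B := by
      have := le_max_right b (-1); rw [hBdef]; linarith
    have hA2 : A ≤ -2 := min_le_right _ _
    have hAB : A < B := by linarith
    have hm1 : (-1:ℝ) ∈ Icc A B := ⟨by linarith, by linarith⟩
    have hsub : ∀ x ∈ Icc A B, x < 0 := fun x hx => lt_of_le_of_lt hx.2 hB0
    have hgcont : ContinuousOn (fun y => h y / y) (Icc A B) := fun x hx =>
      ((hgd x (hsub x hx)).differentiableAt.continuousAt).continuousWithinAt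
    obtain ⟨c, hcmem, hcmax⟩ := isCompact_Icc.exists_isMaxOn ⟨-1, hm1⟩ hgcont
    have hcM : M ≤ h c / c := by
      have := hcmax hm1
      simpa [hMdef] using this
    have hgA : h A / A < M := ha A (min_le_left _ _)
    have hgB : h B / B < M := hb ⟨hbB, hB0⟩
    have hAc : A < c := by
      rcases lt_or_eq_of_le hcmem.1 with h1 | h1
      · exact h1
      · exfalso; rw [← h1] at hcM; linarith
    have hcB : c < B := by
      rcases lt_or_eq_of_le hcmem.2 with h1 | h1
      · exact h1
      · exfalso; rw [h1] at hcM; linarith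
    have hc0 : c < 0 := lt_of_lt_of_le hcB (le_of_lt hB0)
    have hloc : IsLocalMax (fun y => h y / y) c := by
      have hmem : Icc A B ∈ 𝓝 c := Icc_mem_nhds hAc hcB
      exact hcmax.isLocalMax hmem
    have hder0 : (deriv h c * c - h c * 1) / c ^ 2 = 0 :=
      hloc.hasDerivAt_eq_zero (hgd c hc0)
    have hc2 : c ^ 2 ≠ 0 := pow_ne_zero _ (ne_of_lt hc0)
    have : deriv h c * c - h c * 1 = 0 := by
      rcases div_eq_zero_iff.mp hder0 with h' | h'
      · exact h'
      · exact absurd h' hc2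
    exact ⟨c, hc0, by simp only [hφdef]; linarith⟩
  obtain ⟨c, hc0, hφc⟩ := hex
  refine ⟨c, ⟨hc0, by have := sub_eq_zero.mp hφc; linarith⟩, ?_⟩
  rintro y ⟨hy0, hy⟩
  have hφy : φ y = 0 := by simp only [hφdef]; linarith
  rcases lt_trichotomy y c with hlt | heq | hgt
  · exact absurd (huniq y c hy0 hc0 hφy hφc hlt) (fun x => x)
  · exact heq
  · exact absurd (huniq c y hc0 hy0 hφc hφy hgt) (fun x => x)
end

section
/- Let h satisfy h'' (z) = h(z) + z h'(z) on ℝ (the α = 1 ODE) with h > 0, h' < 0 on (−∞, 0). Define F(β) = −β h'(−β) − h(−β) for β > 0. If h(z)/z → −∞ as z → 0⁻ and as z → −∞, then F has exactly one zero β* > 0, and at β* one has h''(−β*) = 2h(−β*) > 0. -/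
open Filter Topology Set

theorem stmt17 (h : ℝ → ℝ)
    (hd : Differentiable ℝ h) (hd' : Differentiable ℝ (deriv h))
    (hode : ∀ z : ℝ, deriv (deriv h) z = h z + z * deriv h z)
    (hpos : ∀ z < (0:ℝ), 0 < h z) (hneg : ∀ z < (0:ℝ), deriv h z < 0)
    (hzero : Tendsto (fun z => h z / z) (𝓝[<] 0) atBot)
    (hbot : Tendsto (fun z => h z / z) atBot atBot)
    (F : ℝ → ℝ) (hF : F = fun β => -β * deriv h (-β) - h (-β)) :
    (∃! β : ℝ, 0 < β ∧ F β = 0) ∧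
    ∀ β : ℝ, 0 < β → F β = 0 →
      deriv (deriv h) (-β) = 2 * h (-β) ∧ 0 < deriv (deriv h) (-β) := by
  set g : ℝ → ℝ := fun x => x * deriv h x - h x with hgdef
  have hFg : ∀ β : ℝ, F β = g (-β) := by
    intro β; rw [hF]
  have hgc : Continuous g := (continuous_id.mul hd'.continuous).sub hd.continuous
  have hg : ∀ x : ℝ, HasDerivAt g (x * deriv (deriv h) x) x := by
    intro x
    have h1 : HasDerivAt (fun x => x * deriv h x) (1 * deriv h x + x * deriv (deriv h) x) x :=
      (hasDerivAt_id x).mul (hd' x).hasDerivAt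
    have h2 := h1.sub (hd x).hasDerivAt
    exact h2.congr_deriv (by ring)
  have hder : ∀ x : ℝ, x < 0 → g x = 0 → x * deriv (deriv h) x < 0 := by
    intro x hx h0
    have hx' : x * deriv h x = h x := by
      have : x * deriv h x - h x = 0 := h0
      linarith
    rw [hode x]
    have e2 : x * (x * deriv h x) = x * h x := by rw [hx']
    have e3 : x * (h x + x * deriv h x) = x * h x + x * (x * deriv h x) := by ring
    have hp := mul_neg_of_neg_of_pos hx (hpos x hx)
    linarith [e3, e2, hp]
  -- sign of g near a zero
  have hslope : ∀ t : ℝ, t < 0 → g t = 0 → ∀ᶠ y in 𝓝[≠] t, slope g t y < 0 := by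
    intro t ht h0
    exact (hasDerivAt_iff_tendsto_slope.mp (hg t)).eventually (Iio_mem_nhds (hder t ht h0))
  have hsign_left : ∀ t : ℝ, t < 0 → g t = 0 → ∀ᶠ y in 𝓝[<] t, 0 < g y := by
    intro t ht h0
    have E := (hslope t ht h0).filter_mono
      (nhdsWithin_mono t (fun x hx => Set.mem_compl_singleton_iff.mpr (ne_of_lt hx)))
    have E2 : ∀ᶠ y in 𝓝[<] t, y < t := eventually_mem_nhdsWithin
    filter_upwards [E, E2] with y hy hyt
    rw [slope_def_field, h0, sub_zero] at hy
    rcases div_neg_iff.mp hy with ⟨h1, h2⟩ | ⟨h1, h2⟩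
    · exact h1
    · linarith
  have hsign_right : ∀ t : ℝ, t < 0 → g t = 0 → ∀ᶠ y in 𝓝[>] t, g y < 0 := by
    intro t ht h0
    have E := (hslope t ht h0).filter_mono
      (nhdsWithin_mono t (fun x hx => Set.mem_compl_singleton_iff.mpr (ne_of_gt hx)))
    have E2 : ∀ᶠ y in 𝓝[>] t, t < y := eventually_mem_nhdsWithin
    filter_upwards [E, E2] with y hy hyt
    rw [slope_def_field, h0, sub_zero] at hy
    rcases div_neg_iff.mp hy with ⟨h1, h2⟩ | ⟨h1, h2⟩
    · linarith
    · exact h1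
  -- uniqueness core
  have key : ∀ x₁ x₂ : ℝ, x₁ < x₂ → x₂ < 0 → g x₁ = 0 → g x₂ = 0 → False := by
    intro x₁ x₂ h12 h20 hz1 hz2
    obtain ⟨q, hq_mem, hq_pos⟩ : ∃ q, q ∈ Ioo x₁ x₂ ∧ 0 < g q := by
      have E1 := hsign_left x₂ h20 hz2
      have E2 : ∀ᶠ y in 𝓝[<] x₂, y ∈ Ioo x₁ x₂ :=
        eventually_of_mem (Ioo_mem_nhdsLT_of_mem ⟨h12, le_refl x₂⟩) (fun x hx => hx)
      obtain ⟨q, hq1, hq2⟩ := (E1.and E2).exists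
      exact ⟨q, hq2, hq1⟩
    set K := Icc x₁ q ∩ g ⁻¹' {0} with hK
    have hKne : K.Nonempty := ⟨x₁, ⟨le_refl _, le_of_lt hq_mem.1⟩, hz1⟩
    have hKc : IsClosed K := isClosed_Icc.inter (isClosed_singleton.preimage hgc)
    have hKb : BddAbove K := ⟨q, fun x hx => hx.1.2⟩
    have htK : sSup K ∈ K := hKc.csSup_mem hKne hKb
    set t := sSup K with ht
    have hgt : g t = 0 := htK.2
    have htq : t < q := lt_of_le_of_ne htK.1.2 (by
      intro e; rw [e] at hgt; linarith)
    have ht0 : t < 0 := htq.trans (hq_mem.2.trans h20)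
    obtain ⟨p, hp_mem, hp_neg⟩ : ∃ p, p ∈ Ioo t q ∧ g p < 0 := by
      have E1 := hsign_right t ht0 hgt
      have E2 : ∀ᶠ y in 𝓝[>] t, y ∈ Ioo t q :=
        eventually_of_mem (Ioo_mem_nhdsGT_of_mem ⟨le_refl t, htq⟩) (fun x hx => hx)
      obtain ⟨p, hp1, hp2⟩ := (E1.and E2).exists
      exact ⟨p, hp2, hp1⟩
    have hiv := intermediate_value_Icc (le_of_lt hp_mem.2) hgc.continuousOn
    obtain ⟨m, hm_mem, hm0⟩ := hiv ⟨le_of_lt hp_neg, le_of_lt hq_pos⟩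
    have hmK : m ∈ K := ⟨⟨le_trans (le_trans htK.1.1 (le_of_lt hp_mem.1)) hm_mem.1, hm_mem.2⟩, hm0⟩
    have : m ≤ t := le_csSup hKb hmK
    linarith [hp_mem.1, hm_mem.1]
  -- existence
  obtain ⟨x₀, hx₀0, hx₀z⟩ : ∃ x₀ : ℝ, x₀ < 0 ∧ g x₀ = 0 := by
    set c := h (-1) / (-1) with hc
    have E1 : {z : ℝ | h z / z < c} ∈ 𝓝[<] (0:ℝ) := hzero.eventually (eventually_lt_atBot c)
    obtain ⟨l₁, hl₁, hsub⟩ := mem_nhdsLT_iff_exists_Ioo_subset.mp E1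
    obtain ⟨b₀, hb₀⟩ := eventually_atBot.mp (hbot.eventually (eventually_lt_atBot c))
    have hl₁0 : l₁ < 0 := hl₁
    set r := max l₁ (-1) / 2 with hr
    have hm1 : l₁ ≤ max l₁ (-1) := le_max_left _ _
    have hm2 : (-1:ℝ) ≤ max l₁ (-1) := le_max_right _ _
    have hmneg : max l₁ (-1) < 0 := max_lt hl₁0 (by norm_num)
    have hr0 : r < 0 := by rw [hr]; linarith
    have hrl : l₁ < r := by rw [hr]; linarith
    have hr1 : -1 < r := by rw [hr]; linarith
    set l := min b₀ (-2) with hl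
    have hl2 : l ≤ -2 := min_le_right _ _
    have hlb : l ≤ b₀ := min_le_left _ _
    have hlr : l < r := by linarith
    have hcont : ContinuousOn (fun x => h x / x) (Icc l r) :=
      hd.continuous.continuousOn.div continuousOn_id
        (fun x hx => (lt_of_le_of_lt hx.2 hr0).ne)
    obtain ⟨x₀, hx₀mem, hx₀max⟩ :=
      isCompact_Icc.exists_isMaxOn ⟨l, left_mem_Icc.mpr hlr.le⟩ hcont
    have hx₀0 : x₀ < 0 := lt_of_le_of_lt hx₀mem.2 hr0
    have hca : c ≤ h x₀ / x₀ := hx₀max (⟨by linarith, by linarith⟩ : (-1:ℝ) ∈ Icc l r)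
    have hx₀l : l < x₀ := by
      rcases lt_or_eq_of_le hx₀mem.1 with hlt | heq
      · exact hlt
      · exfalso
        have := hb₀ l hlb
        rw [heq] at this
        linarith
    have hx₀r : x₀ < r := by
      rcases lt_or_eq_of_le hx₀mem.2 with hlt | heq
      · exact hlt
      · exfalso
        have := hsub ⟨hrl, hr0⟩
        rw [← heq] at this
        exact absurd hca (not_le.mpr this)
    have hloc : IsLocalMax (fun x => h x / x) x₀ := hx₀max.isLocalMax (Icc_mem_nhds hx₀l hx₀r)
    have hder_u : HasDerivAt (fun x => h x / x)
        ((deriv h x₀ * x₀ - h x₀ * 1) / x₀ ^ 2) x₀ :=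
      (hd x₀).hasDerivAt.div (hasDerivAt_id x₀) hx₀0.ne
    have hz := hloc.hasDerivAt_eq_zero hder_u
    have h2 : x₀ ^ 2 ≠ 0 := pow_ne_zero _ hx₀0.ne
    have h3 : deriv h x₀ * x₀ - h x₀ * 1 = 0 := (div_eq_zero_iff.mp hz).resolve_right h2
    refine ⟨x₀, hx₀0, ?_⟩
    show x₀ * deriv h x₀ - h x₀ = 0
    have : deriv h x₀ * x₀ = x₀ * deriv h x₀ := mul_comm _ _
    linarith
  constructor
  · refine ⟨-x₀, ⟨by linarith, by rw [hFg]; simpa using hx₀z⟩, ?_⟩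
    rintro y ⟨hy, hFy⟩
    have hgy : g (-y) = 0 := by rw [hFg] at hFy; exact hFy
    have hyneg : -y < 0 := by linarith
    rcases lt_trichotomy (-y) x₀ with hlt | heq | hgt
    · exact absurd (key (-y) x₀ hlt hx₀0 hgy hx₀z) (not_false)
    · linarith
    · exact absurd (key x₀ (-y) hgt hyneg hx₀z hgy) (not_false)
  · intro β hβ hFβ
    rw [hF] at hFβ
    simp only at hFβ
    have e : -β * deriv h (-β) = h (-β) := by linarith
    have hb : (-β : ℝ) < 0 := by linarith
    have hp := hpos (-β) hb
    constructor
    · rw [hode]; linarith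
    · rw [hode]; linarith
end
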